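/- Suppose Ψ : ℝ → ℝ is odd and nondecreasing, W has symmetric density p with p(u) > 0 for |u| ≤ c for some c > 0, and Ψ is strictly increasing on (−c₂, c₂) for some c₂ > 0. Define φ(x) = E[Ψ(x + W)]. Then φ is odd, nondecreasing, and φ(x) > 0 for all x > 0. -/
import Mathlib


open MeasureTheory

theorem stmt_15 (p : ℝ → ℝ) (hpm : Measurable p) (hp0 : ∀ u, 0 ≤ p u)
    (hp1 : (∫ u : ℝ, p u) = 1) (hpint : Integrable p)
    (hpsym : ∀ u : ℝ, p (-u) = p u)
    (c : ℝ) (hc : 0 < c) (hppos : ∀ u : ℝ, |u| ≤ c → 0 < p u)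
    (Ψ : ℝ → ℝ) (hΨm : Measurable Ψ)
    (c₁ : ℝ) (hbd : ∀ a : ℝ, |Ψ a| ≤ c₁)
    (hodd : ∀ a : ℝ, Ψ (-a) = -Ψ a) (hmono : Monotone Ψ)
    (c₂ : ℝ) (hc₂ : 0 < c₂) (hstrict : StrictMonoOn Ψ (Set.Ioo (-c₂) c₂)) :
    (∀ x : ℝ, (∫ u : ℝ, Ψ (-x + u) * p u) = -∫ u : ℝ, Ψ (x + u) * p u) ∧
    Monotone (fun x : ℝ => ∫ u : ℝ, Ψ (x + u) * p u) ∧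
    (∀ x : ℝ, 0 < x → 0 < ∫ u : ℝ, Ψ (x + u) * p u) := by
  have hc₁ : 0 ≤ c₁ := le_trans (abs_nonneg _) (hbd 0)
  have hint : ∀ x : ℝ, Integrable (fun u => Ψ (x + u) * p u) := by
    intro x
    have hm : Measurable fun u => Ψ (x + u) * p u :=
      (hΨm.comp (measurable_const_add x)).mul hpm
    refine (hpint.const_mul c₁).mono hm.aestronglyMeasurable ?_
    filter_upwards with u
    simp only [Real.norm_eq_abs, abs_mul]
    calc |Ψ (x + u)| * |p u| ≤ c₁ * |p u| :=
          mul_le_mul_of_nonneg_right (hbd _) (abs_nonneg _)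
      _ = |c₁| * |p u| := by rw [abs_of_nonneg hc₁]
  have hoddφ : ∀ x : ℝ, (∫ u : ℝ, Ψ (-x + u) * p u) = -∫ u : ℝ, Ψ (x + u) * p u := by
    intro x
    have h1 : (∫ u : ℝ, Ψ (-x + -u) * p (-u)) = ∫ u : ℝ, Ψ (-x + u) * p u :=
      integral_neg_eq_self (fun u => Ψ (-x + u) * p u) volume
    rw [← h1]
    have h2 : ∀ u : ℝ, Ψ (-x + -u) * p (-u) = -(Ψ (x + u) * p u) := by
      intro u
      have : (-x + -u) = -(x + u) := by ring
      rw [this, hodd, hpsym]; ring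
    simp only [h2]
    rw [integral_neg]
  have hmonoφ : Monotone (fun x : ℝ => ∫ u : ℝ, Ψ (x + u) * p u) := by
    intro a b hab
    apply integral_mono (hint a) (hint b)
    intro u
    exact mul_le_mul_of_nonneg_right (hmono (by linarith)) (hp0 u)
  refine ⟨hoddφ, hmonoφ, ?_⟩
  have hint0 : Integrable (fun u => Ψ u * p u) := by
    have := hint 0
    simpa using this
  have hzero : (∫ u : ℝ, Ψ u * p u) = 0 := by
    have h := hoddφ 0
    simp only [neg_zero, zero_add] at h
    linarith
  intro x hx
  set ε : ℝ := min c c₂ / 2 with hεdef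
  have hεpos : 0 < ε := by
    have := lt_min hc hc₂
    simp only [hεdef]; linarith
  have hεc : ε ≤ c := by
    have := min_le_left c c₂
    simp only [hεdef]; linarith [lt_min hc hc₂]
  have hεc₂ : ε ≤ c₂ / 2 := by
    have := min_le_right c c₂
    simp only [hεdef]; linarith
  set g : ℝ → ℝ := fun u => (Ψ (x + u) - Ψ u) * p u with hgdef
  have hgint : Integrable g := by
    have : g = fun u => Ψ (x + u) * p u - Ψ u * p u := by
      funext u; simp only [hgdef]; ring
    rw [this]
    exact (hint x).sub hint0
  have hgnonneg : ∀ u : ℝ, 0 ≤ g u := by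
    intro u
    apply mul_nonneg _ (hp0 u)
    have : Ψ u ≤ Ψ (x + u) := hmono (by linarith)
    linarith
  have hgpos : ∀ u ∈ Set.Ioo (-ε) (0 : ℝ), 0 < g u := by
    intro u hu
    obtain ⟨hu1, hu2⟩ := hu
    have hpu : 0 < p u := by
      apply hppos
      rw [abs_of_nonpos (le_of_lt hu2)]
      linarith
    apply mul_pos _ hpu
    have huI : u ∈ Set.Ioo (-c₂) c₂ := ⟨by linarith, by linarith⟩
    set t : ℝ := min (x + u) (c₂ / 2) with htdef
    have htI : t ∈ Set.Ioo (-c₂) c₂ := by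
      constructor
      · apply lt_min <;> linarith
      · have := min_le_right (x + u) (c₂ / 2)
        simp only [htdef]; linarith
    have hut : u < t := lt_min (by linarith) (by linarith)
    have h1 : Ψ u < Ψ t := hstrict huI htI hut
    have h2 : Ψ t ≤ Ψ (x + u) := hmono (min_le_left _ _)
    linarith
  have hkey : 0 < ∫ u : ℝ, g u := by
    rw [integral_pos_iff_support_of_nonneg (fun u => hgnonneg u) hgint]
    apply lt_of_lt_of_le _ (measure_mono (fun u hu => ne_of_gt (hgpos u hu)))
    rw [Real.volume_Ioo]
    simp only [sub_neg_eq_add, zero_add]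
    exact_mod_cast ENNReal.ofReal_pos.mpr hεpos
  have hsub : (∫ u : ℝ, g u) = (∫ u : ℝ, Ψ (x + u) * p u) - ∫ u : ℝ, Ψ u * p u := by
    rw [← integral_sub (hint x) hint0]
    congr 1; funext u; simp only [hgdef]; ring
  rw [hsub, hzero] at hkey
  linarith
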